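/- arXiv:2105.03213 — 4 statements merged into one kernel-verified Lean document; each statement's English description precedes it below -/
import Mathlib

section
/- Fix n ∈ ℕ. Let J be a nonempty finite type and let a, b, c, d : J → ℝ be a facet representation of 𝒫_n, i.e. suppose that for all v = (v₁,v₂,v₃) ∈ ℝ³, v ∈ 𝒫_n if and only if a j · v₁ + b j · v₂ + c j · v₃ ≤ d j for all j ∈ J. Let S = {j ∈ J : c j > 0} and for j ∈ S define h_j(x₁,x₂) = (d j − a j · x₁ − b j · x₂) / c j. Then S is nonempty, and for every x = (x₁,x₂) ∈ [0,1]², the minimum over j ∈ S of h_j(x₁,x₂) equals f_n(x) = sSup {z ∈ ℝ : (x₁, x₂, z) ∈ 𝒫_n}. -/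
/-- The grid `G_n = {k / 2^n : k ∈ ℕ, k ≤ 2^n} ⊆ [0,1]`. -/
def latticeG (n : ℕ) : Set ℝ := {x : ℝ | ∃ k : ℕ, k ≤ 2 ^ n ∧ x = (k : ℝ) / 2 ^ n}

/-- The convex polytope `𝒫_n`: the convex hull of the `n`-th order lattice of
`f(x₁,x₂) = √(x₁x₂)` together with the `n`-th order lattice of the zero function. -/
noncomputable def polyP (n : ℕ) : Set (ℝ × ℝ × ℝ) :=
  convexHull ℝ
    {v : ℝ × ℝ × ℝ | ∃ a b : ℝ, a ∈ latticeG n ∧ b ∈ latticeG n ∧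
      (v = (a, b, Real.sqrt (a * b)) ∨ v = (a, b, 0))}

/-- The upper envelope `f_n(x) = sSup {z : (x₁, x₂, z) ∈ 𝒫_n}`. -/
noncomputable def fApprox (n : ℕ) (x : ℝ × ℝ) : ℝ :=
  sSup {z : ℝ | (x.1, x.2, z) ∈ polyP n}

/-!
Above a point `x` of the square, the fibre `{z | (x, z) ∈ 𝒫_n}` is cut out by the one-variable
inequalities `c j * z ≤ d j - a j * x₁ - b j * x₂`, and `z = 0` satisfies them all. Those with
`c j ≤ 0` hold on the whole ray above any feasible `z`: if there were no upper facet, the fibre over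
`(0, 0)` would be unbounded, contradicting `𝒫_n ⊆ {z ≤ 1}`; otherwise the greatest element of the
fibre is the minimum of `h_j(x)` over the upper facets.
-/

section VerticalFibre

variable {J : Type*} [Fintype J] {c e : J → ℝ}

lemma nonempty_filter_pos_of_bddAbove {z₀ : ℝ} (hz₀ : ∀ j, c j * z₀ ≤ e j)
    (hbdd : BddAbove {z : ℝ | ∀ j, c j * z ≤ e j}) :
    (Finset.univ.filter (fun j => 0 < c j)).Nonempty := by
  by_contra hS
  have hc : ∀ j, c j ≤ 0 := fun j => not_lt.1 fun hj => hS ⟨j, by simpa using hj⟩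
  obtain ⟨B, hB⟩ := hbdd
  have hmem : max z₀ (B + 1) ∈ {z : ℝ | ∀ j, c j * z ≤ e j} := fun j =>
    (mul_le_mul_of_nonpos_left (le_max_left _ _) (hc j)).trans (hz₀ j)
  linarith [hB hmem, le_max_right z₀ (B + 1)]

lemma isGreatest_inf'_div {z₀ : ℝ} (hz₀ : ∀ j, c j * z₀ ≤ e j)
    (hS : (Finset.univ.filter (fun j => 0 < c j)).Nonempty) :
    IsGreatest {z : ℝ | ∀ j, c j * z ≤ e j}
      ((Finset.univ.filter (fun j => 0 < c j)).inf' hS (fun j => e j / c j)) := by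
  set m := (Finset.univ.filter (fun j => 0 < c j)).inf' hS (fun j => e j / c j)
  have hle_iff : ∀ z : ℝ, z ≤ m ↔ ∀ j, 0 < c j → c j * z ≤ e j := fun z => by
    simp only [m, Finset.le_inf'_iff, Finset.mem_filter, Finset.mem_univ, true_and]
    exact forall₂_congr fun j hj => by rw [le_div_iff₀ hj, mul_comm]
  have hz₀m : z₀ ≤ m := (hle_iff z₀).2 fun j _ => hz₀ j
  refine ⟨fun j => ?_, fun z hz => (hle_iff z).2 fun j _ => hz j⟩
  rcases lt_or_ge 0 (c j) with hj | hj
  · exact (hle_iff m).1 le_rfl j hj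
  · exact (mul_le_mul_of_nonpos_left hz₀m hj).trans (hz₀ j)

end VerticalFibre

lemma snd_snd_le_one_of_mem_polyP {n : ℕ} {v : ℝ × ℝ × ℝ} (hv : v ∈ polyP n) : v.2.2 ≤ 1 := by
  refine convexHull_min ?_ (convex_halfSpace_le (f := fun v : ℝ × ℝ × ℝ => v.2.2)
    ⟨fun _ _ => rfl, fun _ _ => rfl⟩ (1 : ℝ)) hv
  rintro w ⟨p, q, ⟨k, hk, rfl⟩, ⟨l, hl, rfl⟩, rfl | rfl⟩
  · have hG : ∀ {i : ℕ}, i ≤ 2 ^ n → (i : ℝ) / 2 ^ n ≤ 1 := fun hi =>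
      div_le_one_of_le₀ (by exact_mod_cast hi) (by positivity)
    exact Real.sqrt_le_one.2 (mul_le_one₀ (hG hk) (by positivity) (hG hl))
  · exact zero_le_one (α := ℝ)

lemma mem_polyP_of_mem_Icc {n : ℕ} {x₁ x₂ : ℝ} (hx₁ : x₁ ∈ Set.Icc (0 : ℝ) 1)
    (hx₂ : x₂ ∈ Set.Icc (0 : ℝ) 1) : ((x₁, x₂, 0) : ℝ × ℝ × ℝ) ∈ polyP n := by
  have hG : ({0, 1} : Set ℝ) ⊆ latticeG n := by
    rintro _ (rfl | rfl)
    exacts [⟨0, by positivity, by simp⟩, ⟨2 ^ n, le_rfl, by simp⟩]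
  have hsub : ({0, 1} : Set ℝ) ×ˢ ({0, 1} : Set ℝ) ×ˢ ({0} : Set ℝ) ⊆
      {v : ℝ × ℝ × ℝ | ∃ a b : ℝ, a ∈ latticeG n ∧ b ∈ latticeG n ∧
        (v = (a, b, Real.sqrt (a * b)) ∨ v = (a, b, 0))} := by
    rintro ⟨p, q, r⟩ ⟨hp, hq, rfl : r = 0⟩
    exact ⟨p, q, hG hp, hG hq, Or.inr rfl⟩
  refine convexHull_mono hsub ?_
  simp only [convexHull_prod, convexHull_pair, convexHull_singleton, segment_eq_Icc zero_le_one]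
  exact ⟨hx₁, hx₂, rfl⟩

theorem fApprox_eq_min_upper_facets_general (n : ℕ)
    (J : Type*) [Fintype J]
    (a b c d : J → ℝ)
    (hfacet : ∀ v : ℝ × ℝ × ℝ,
      v ∈ polyP n ↔ ∀ j : J, a j * v.1 + b j * v.2.1 + c j * v.2.2 ≤ d j) :
    ∃ hS : (Finset.univ.filter (fun j : J => 0 < c j)).Nonempty,
      ∀ x₁ x₂ : ℝ, x₁ ∈ Set.Icc (0:ℝ) 1 → x₂ ∈ Set.Icc (0:ℝ) 1 →
        (Finset.univ.filter (fun j : J => 0 < c j)).inf' hS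
            (fun j => (d j - a j * x₁ - b j * x₂) / c j)
          = fApprox n (x₁, x₂) := by
  have hfibre : ∀ x₁ x₂ : ℝ, {z : ℝ | (x₁, x₂, z) ∈ polyP n} =
      {z : ℝ | ∀ j, c j * z ≤ d j - a j * x₁ - b j * x₂} := fun x₁ x₂ => by
    ext z
    simp only [Set.mem_ofPred_eq, hfacet]
    exact forall_congr' fun j => by constructor <;> intro h <;> linarith
  have hbase : ∀ x₁ x₂ : ℝ, x₁ ∈ Set.Icc (0:ℝ) 1 → x₂ ∈ Set.Icc (0:ℝ) 1 →
      ∀ j, c j * 0 ≤ d j - a j * x₁ - b j * x₂ := fun x₁ x₂ hx₁ hx₂ =>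
    (hfibre x₁ x₂).subset (mem_polyP_of_mem_Icc hx₁ hx₂)
  have hmem₀ := hbase 0 0 ⟨le_rfl, zero_le_one⟩ ⟨le_rfl, zero_le_one⟩
  have hS := nonempty_filter_pos_of_bddAbove hmem₀
    (hfibre 0 0 ▸ ⟨1, fun _ hz => snd_snd_le_one_of_mem_polyP hz⟩)
  refine ⟨hS, fun x₁ x₂ hx₁ hx₂ => ?_⟩
  rw [fApprox, hfibre]
  exact ((isGreatest_inf'_div (hbase x₁ x₂ hx₁ hx₂) hS).csSup_eq).symm

theorem fApprox_eq_min_upper_facets (n : ℕ)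
    (J : Type*) [Fintype J] [Nonempty J]
    (a b c d : J → ℝ)
    (hfacet : ∀ v : ℝ × ℝ × ℝ,
      v ∈ polyP n ↔ ∀ j : J, a j * v.1 + b j * v.2.1 + c j * v.2.2 ≤ d j) :
    ∃ hS : (Finset.univ.filter (fun j : J => 0 < c j)).Nonempty,
      ∀ x₁ x₂ : ℝ, x₁ ∈ Set.Icc (0:ℝ) 1 → x₂ ∈ Set.Icc (0:ℝ) 1 →
        (Finset.univ.filter (fun j : J => 0 < c j)).inf' hS
            (fun j => (d j - a j * x₁ - b j * x₂) / c j)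
          = fApprox n (x₁, x₂) :=
  fApprox_eq_min_upper_facets_general n J a b c d hfacet
end

section
/- The sequence of functions f_n converges uniformly on [0,1]² to f(x₁,x₂) = Real.sqrt (x₁ * x₂): for every ε > 0 there exists N ∈ ℕ such that for all n ≥ N and all x = (x₁,x₂) ∈ [0,1]², |f_n(x) − Real.sqrt (x₁ * x₂)| < ε. -/
/-!
The hypograph of `√(x₁x₂)` over the quadrant is convex (superadditivity of `√(x₁x₂)` is
Cauchy–Schwarz), and it contains every generator of `𝒫_n`, so `f_n ≤ f`. Conversely, the four
grid points at the corners of the dyadic cell containing `x` carry heights at least `√(ab)`,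
where `(a, b)` is the lower-left corner; by convexity so does the point of `𝒫_n` above `x`, and
`√(x₁x₂) - √(ab) ≤ √(2 / 2ⁿ)`.
-/

open Real Set Filter Topology

lemma latticeG_subset_Icc (n : ℕ) : latticeG n ⊆ Icc 0 1 := by
  rintro _ ⟨k, hk, rfl⟩
  have hk' : (k : ℝ) ≤ 2 ^ n := by exact_mod_cast hk
  exact ⟨by positivity, div_le_one_of_le₀ hk' (by positivity)⟩

lemma exists_latticeG_le_le (n : ℕ) {x : ℝ} (hx : x ∈ Icc (0 : ℝ) 1) :
    ∃ a ∈ latticeG n, ∃ a' ∈ latticeG n, a ≤ x ∧ x ≤ a' ∧ x - a ≤ (2 ^ n)⁻¹ := by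
  have h2 : (0 : ℝ) < 2 ^ n := by positivity
  have hceil : ⌈x * 2 ^ n⌉₊ ≤ 2 ^ n := Nat.ceil_le.2 (by push_cast; nlinarith [hx.2])
  refine ⟨⌊x * 2 ^ n⌋₊ / 2 ^ n, ⟨_, (Nat.floor_le_ceil _).trans hceil, rfl⟩,
    ⌈x * 2 ^ n⌉₊ / 2 ^ n, ⟨_, hceil, rfl⟩, ?_, ?_, ?_⟩
  · rw [div_le_iff₀ h2]
    exact Nat.floor_le (mul_nonneg hx.1 h2.le)
  · rw [le_div_iff₀ h2]
    exact Nat.le_ceil _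
  · have := Nat.lt_floor_add_one (x * 2 ^ n)
    rw [sub_le_iff_le_add, inv_eq_one_div, ← add_div, le_div_iff₀ h2]
    linarith

lemma sqrt_mul_add_sqrt_mul_le {a₁ a₂ b₁ b₂ : ℝ} (ha₁ : 0 ≤ a₁) (ha₂ : 0 ≤ a₂) (hb₁ : 0 ≤ b₁)
    (hb₂ : 0 ≤ b₂) : √(a₁ * b₁) + √(a₂ * b₂) ≤ √((a₁ + a₂) * (b₁ + b₂)) := by
  simpa [sqrt_mul, ha₁, ha₂, add_nonneg ha₁ ha₂, Fin.sum_univ_two] using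
    sum_sqrt_mul_sqrt_le Finset.univ (f := ![a₁, a₂]) (g := ![b₁, b₂])
      (by simp [Fin.forall_fin_two, *]) (by simp [Fin.forall_fin_two, *])

lemma sqrt_le_sqrt_add_sqrt {x y : ℝ} (hx : 0 ≤ x) (hy : 0 ≤ y) : √(x + y) ≤ √x + √y := by
  rw [sqrt_le_iff]
  refine ⟨by positivity, ?_⟩
  nlinarith [sq_sqrt hx, sq_sqrt hy, sqrt_nonneg x, sqrt_nonneg y]

def sqrtMulHypograph : Set (ℝ × ℝ × ℝ) :=
  {p | 0 ≤ p.1 ∧ 0 ≤ p.2.1 ∧ p.2.2 ≤ √(p.1 * p.2.1)}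

lemma convex_sqrtMulHypograph : Convex ℝ sqrtMulHypograph := by
  rintro ⟨a₁, b₁, z₁⟩ ⟨ha₁, hb₁, hz₁⟩ ⟨a₂, b₂, z₂⟩ ⟨ha₂, hb₂, hz₂⟩ t s ht hs -
  simp only [sqrtMulHypograph, Prod.smul_mk, Prod.mk_add_mk, smul_eq_mul] at *
  have homog : ∀ {r a b : ℝ}, 0 ≤ r → r * √(a * b) = √((r * a) * (r * b)) := fun hr => by
    rw [mul_mul_mul_comm, sqrt_mul (mul_self_nonneg _), sqrt_mul_self hr]
  refine ⟨by positivity, by positivity, ?_⟩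
  calc t * z₁ + s * z₂ ≤ t * √(a₁ * b₁) + s * √(a₂ * b₂) := by gcongr
    _ = √((t * a₁) * (t * b₁)) + √((s * a₂) * (s * b₂)) := by rw [homog ht, homog hs]
    _ ≤ √((t * a₁ + s * a₂) * (t * b₁ + s * b₂)) :=
      sqrt_mul_add_sqrt_mul_le (by positivity) (by positivity) (by positivity) (by positivity)

lemma polyP_subset_sqrtMulHypograph (n : ℕ) : polyP n ⊆ sqrtMulHypograph := by
  refine convexHull_min ?_ convex_sqrtMulHypograph
  rintro _ ⟨a, b, ha, hb, rfl | rfl⟩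
  · exact ⟨(latticeG_subset_Icc n ha).1, (latticeG_subset_Icc n hb).1, le_rfl⟩
  · exact ⟨(latticeG_subset_Icc n ha).1, (latticeG_subset_Icc n hb).1, sqrt_nonneg _⟩

lemma convex_setOf_exists_le_mem {E F : Type*} [AddCommGroup E] [Module ℝ E] [AddCommGroup F]
    [Module ℝ F] {S : Set (E × F × ℝ)} (hS : Convex ℝ S) (L : ℝ) :
    Convex ℝ {u : E × F | ∃ z, L ≤ z ∧ (u.1, u.2, z) ∈ S} := by
  rintro u ⟨z, hz, hu⟩ v ⟨w, hw, hv⟩ t s ht hs hts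
  refine ⟨t * z + s * w, ?_, ?_⟩
  · calc L = t * L + s * L := by rw [← add_mul, hts, one_mul]
      _ ≤ t * z + s * w := by gcongr
  · simpa using hS hu hv ht hs hts

lemma fApprox_le_sqrt_mul (n : ℕ) (x₁ x₂ : ℝ) : fApprox n (x₁, x₂) ≤ √(x₁ * x₂) :=
  Real.sSup_le (fun _ hz => (polyP_subset_sqrtMulHypograph n hz).2.2) (sqrt_nonneg _)

lemma le_fApprox {n : ℕ} {x₁ x₂ z : ℝ} (h : (x₁, x₂, z) ∈ polyP n) : z ≤ fApprox n (x₁, x₂) :=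
  le_csSup ⟨√(x₁ * x₂), fun _ hw => (polyP_subset_sqrtMulHypograph n hw).2.2⟩ h

lemma sqrt_mul_sub_sqrt_mul_le {a b x₁ x₂ h : ℝ} (ha : 0 ≤ a) (hb : b ∈ Icc (0 : ℝ) 1)
    (hx₁ : x₁ ∈ Icc (0 : ℝ) 1) (hh : 0 ≤ h) (hxa : x₁ - a ≤ h) (hxb : x₂ - b ≤ h) :
    √(x₁ * x₂) - √(a * b) ≤ √(2 * h) := by
  have hgap : x₁ * x₂ ≤ a * b + 2 * h := by
    nlinarith [mul_le_mul_of_nonneg_left hxb hx₁.1, mul_le_mul_of_nonneg_left hxa hb.1,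
      mul_le_mul_of_nonneg_right hx₁.2 hh, mul_le_mul_of_nonneg_right hb.2 hh]
  have := (sqrt_le_sqrt hgap).trans
    (sqrt_le_sqrt_add_sqrt (mul_nonneg ha hb.1) (mul_nonneg zero_le_two hh))
  linarith

lemma Convex.Icc_prod_Icc_subset {𝕜 : Type*} [Field 𝕜] [LinearOrder 𝕜] [IsStrictOrderedRing 𝕜]
    {A : Set (𝕜 × 𝕜)} (hA : Convex 𝕜 A) {a a' b b' : 𝕜} (ha : a ≤ a') (hb : b ≤ b')
    (hcorners : {a, a'} ×ˢ {b, b'} ⊆ A) : Icc a a' ×ˢ Icc b b' ⊆ A := by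
  rw [← segment_eq_Icc ha, ← segment_eq_Icc hb, ← convexHull_pair, ← convexHull_pair,
    ← convexHull_prod]
  exact hA.convexHull_subset_iff.2 hcorners

lemma sqrt_mul_sub_le_fApprox (n : ℕ) {x₁ x₂ : ℝ} (hx₁ : x₁ ∈ Icc (0 : ℝ) 1)
    (hx₂ : x₂ ∈ Icc (0 : ℝ) 1) : √(x₁ * x₂) - √(2 * (2 ^ n)⁻¹) ≤ fApprox n (x₁, x₂) := by
  obtain ⟨a, ha, a', ha', hax, hxa', hxa⟩ := exists_latticeG_le_le n hx₁
  obtain ⟨b, hb, b', hb', hbx, hxb', hxb⟩ := exists_latticeG_le_le n hx₂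
  have hcorners : {a, a'} ×ˢ {b, b'} ⊆
      {u : ℝ × ℝ | ∃ z, √(a * b) ≤ z ∧ (u.1, u.2, z) ∈ polyP n} := by
    rintro ⟨p, q⟩ ⟨hp, hq⟩
    obtain ⟨hpG, hap⟩ : p ∈ latticeG n ∧ a ≤ p := by
      rcases hp with rfl | rfl
      exacts [⟨ha, le_rfl⟩, ⟨ha', hax.trans hxa'⟩]
    obtain ⟨hqG, hbq⟩ : q ∈ latticeG n ∧ b ≤ q := by
      rcases hq with rfl | rfl
      exacts [⟨hb, le_rfl⟩, ⟨hb', hbx.trans hxb'⟩]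
    exact ⟨√(p * q), sqrt_le_sqrt (mul_le_mul hap hbq (latticeG_subset_Icc n hb).1
      (latticeG_subset_Icc n hpG).1), subset_convexHull ℝ _ ⟨p, q, hpG, hqG, Or.inl rfl⟩⟩
  obtain ⟨z, hz, hmem⟩ := (convex_setOf_exists_le_mem (convex_convexHull ℝ _) _).Icc_prod_Icc_subset
    (hax.trans hxa') (hbx.trans hxb') hcorners (mk_mem_prod ⟨hax, hxa'⟩ ⟨hbx, hxb'⟩)
  calc √(x₁ * x₂) - √(2 * (2 ^ n)⁻¹) ≤ √(a * b) := by
        linarith [sqrt_mul_sub_sqrt_mul_le (latticeG_subset_Icc n ha).1 (latticeG_subset_Icc n hb)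
          hx₁ (by positivity) hxa hxb]
    _ ≤ z := hz
    _ ≤ fApprox n (x₁, x₂) := le_fApprox hmem

theorem fApprox_tendstoUniformly :
    ∀ ε : ℝ, 0 < ε → ∃ N : ℕ, ∀ n : ℕ, N ≤ n →
      ∀ x₁ x₂ : ℝ, x₁ ∈ Set.Icc (0:ℝ) 1 → x₂ ∈ Set.Icc (0:ℝ) 1 →
        |fApprox n (x₁, x₂) - Real.sqrt (x₁ * x₂)| < ε := by
  intro ε hε
  have hδ : Tendsto (fun n : ℕ => √(2 * (2 ^ n)⁻¹)) atTop (𝓝 0) := by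
    simpa [← inv_pow] using
      ((tendsto_pow_atTop_nhds_zero_of_lt_one (by norm_num) (by norm_num : (2⁻¹ : ℝ) < 1)).const_mul
        (2 : ℝ)).sqrt
  obtain ⟨N, hN⟩ := eventually_atTop.1 ((tendsto_order.1 hδ).2 ε hε)
  refine ⟨N, fun n hn x₁ x₂ hx₁ hx₂ => abs_sub_lt_iff.2 ⟨?_, ?_⟩⟩
  · linarith [fApprox_le_sqrt_mul n x₁ x₂]
  · linarith [sqrt_mul_sub_le_fApprox n hx₁ hx₂, hN n hn]
end

section
/- Let d ∈ ℕ, let Q ⊆ (Fin d → ℝ) be a convex set, let S be a nonempty finite type, and for each j ∈ S let h_j : (Fin d → ℝ) → ℝ be an affine function (h_j x = α j + ⟪v j, x⟫ for some α j ∈ ℝ and v j : Fin d → ℝ). Define F(x) = min_{j ∈ S} h_j(x). Then for every m ∈ ℕ, every collection of weights w : Fin m → ℝ with w i ≥ 0 and ∑ i, w i = 1, and every collection of points x : Fin m → (Fin d → ℝ) with x i ∈ Q for all i, there exist weights W : S → ℝ with W j ≥ 0 and ∑ j, W j = 1 and points q : S → (Fin d → ℝ) with q j ∈ Q for all j, such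 that ∑ j, W j • q j = ∑ i, w i • x i and ∑ j, W j * h_j (q j) = ∑ i, w i * F (x i). -/
/-!
Group the points `x i` according to a facet `c i` at which `F (x i) = min_j h_j (x i)` is
attained, and replace each group by its barycenter, weighted by the total weight of the group.
Convexity keeps the barycenters in `Q`, and since each `h_j` is affine, the weighted value
`W_j h_j (q_j)` of a group equals the sum of the weighted values `w_i F (x_i)` of its members.
-/

open Finset Matrix

theorem AffineMap.sum_smul_map_of_sum_smul_eq {k V W ι : Type*} [Ring k] [AddCommGroup V]
    [Module k V] [AddCommGroup W] [Module k W] (f : V →ᵃ[k] W) {t : Finset ι} {w : ι → k}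
    {x : ι → V} {q : V} (hq : (∑ i ∈ t, w i) • q = ∑ i ∈ t, w i • x i) :
    (∑ i ∈ t, w i) • f q = ∑ i ∈ t, w i • f (x i) := by
  rw [f.decomp]
  simp only [Pi.add_apply, smul_add, sum_add_distrib, ← map_smul, hq, map_sum, sum_smul]

section Merge

variable {R E ι : Type*} [Field R] [LinearOrder R] [IsStrictOrderedRing R] [AddCommGroup E]
  [Module R E] {Q : Set E}

theorem Convex.exists_mem_sum_smul_eq (hQ : Convex R Q) (hQne : Q.Nonempty) {t : Finset ι}
    {w : ι → R} {x : ι → E} (hw : ∀ i ∈ t, 0 ≤ w i) (hx : ∀ i ∈ t, x i ∈ Q) :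
    ∃ q ∈ Q, (∑ i ∈ t, w i) • q = ∑ i ∈ t, w i • x i := by
  rcases (sum_nonneg hw).eq_or_lt with hzero | hpos
  · obtain ⟨q, hq⟩ := hQne
    have hw0 : ∀ i ∈ t, w i = 0 := (sum_eq_zero_iff_of_nonneg hw).mp hzero.symm
    refine ⟨q, hq, ?_⟩
    rw [← hzero, zero_smul, sum_eq_zero fun i hi => by rw [hw0 i hi, zero_smul]]
  · exact ⟨t.centerMass w x, hQ.centerMass_mem hw hpos hx, smul_inv_smul₀ hpos.ne' _⟩

theorem Convex.exists_fiberwise_merge {S : Type*} [Fintype ι] [Fintype S] [DecidableEq S]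
    (hQ : Convex R Q) (hQne : Q.Nonempty) (c : ι → S) (f : S → E →ᵃ[R] R) {w : ι → R}
    {x : ι → E} (hw : ∀ i, 0 ≤ w i) (hx : ∀ i, x i ∈ Q) :
    ∃ (W : S → R) (q : S → E), (∀ j, 0 ≤ W j) ∧ ∑ j, W j = ∑ i, w i ∧ (∀ j, q j ∈ Q) ∧
      ∑ j, W j • q j = ∑ i, w i • x i ∧ ∑ j, W j * f j (q j) = ∑ i, w i * f (c i) (x i) := by
  choose q hqQ hq using fun j =>
    hQ.exists_mem_sum_smul_eq hQne (t := {i | c i = j}) (fun i _ => hw i) (fun i _ => hx i)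
  refine ⟨fun j => ∑ i with c i = j, w i, q, fun j => sum_nonneg fun i _ => hw i,
    sum_fiberwise _ c w, hqQ, ?_, ?_⟩
  · simp only [hq, sum_fiberwise]
  · calc ∑ j, (∑ i with c i = j, w i) * f j (q j)
        = ∑ j, ∑ i with c i = j, w i * f (c i) (x i) := by
          refine sum_congr rfl fun j _ => ?_
          simp only [← smul_eq_mul, (f j).sum_smul_map_of_sum_smul_eq (hq j)]
          exact sum_congr rfl fun i hi => by rw [(mem_filter.mp hi).2]
      _ = ∑ i, w i * f (c i) (x i) := sum_fiberwise _ c _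

end Merge

theorem partition_and_merge
    (d : ℕ) (Q : Set (Fin d → ℝ)) (hQ : Convex ℝ Q)
    (S : Type*) [Fintype S] [Nonempty S]
    (h : S → (Fin d → ℝ) → ℝ) (α : S → ℝ) (v : S → (Fin d → ℝ))
    (haff : ∀ j x, h j x = α j + ∑ i, v j i * x i)
    (m : ℕ) (w : Fin m → ℝ) (hw : ∀ i, 0 ≤ w i) (hw1 : ∑ i, w i = 1)
    (x : Fin m → (Fin d → ℝ)) (hx : ∀ i, x i ∈ Q) :
    ∃ (W : S → ℝ) (q : S → (Fin d → ℝ)),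
      (∀ j, 0 ≤ W j) ∧ (∑ j, W j = 1) ∧ (∀ j, q j ∈ Q) ∧
      (∑ j, W j • q j = ∑ i, w i • x i) ∧
      (∑ j, W j * h j (q j)
        = ∑ i, w i * (Finset.univ.inf' Finset.univ_nonempty (fun j : S => h j (x i)))) := by
  classical
  obtain ⟨i₀⟩ : Nonempty (Fin m) :=
    Fin.pos_iff_nonempty.mp (Nat.pos_of_ne_zero (by rintro rfl; simp at hw1))
  choose c _ hc using fun i => exists_mem_eq_inf' univ_nonempty fun j : S => h j (x i)
  let f : S → (Fin d → ℝ) →ᵃ[ℝ] ℝ := fun j =>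
    (dotProductBilin ℝ ℝ (v j)).toAffineMap + AffineMap.const ℝ _ (α j)
  have hf : ∀ j, ⇑(f j) = h j := fun j => funext fun y => by
    simp [f, haff, dotProduct, add_comm]
  obtain ⟨W, q, hW, hW1, hqQ, hbary, hval⟩ := hQ.exists_fiberwise_merge ⟨x i₀, hx i₀⟩ c f hw hx
  refine ⟨W, q, hW, hW1.trans hw1, hqQ, hbary, ?_⟩
  simpa only [hf, ← hc] using hval
end

section
/- Let ε ∈ ℝ with 0 < ε < 1, let n ∈ ℕ with n ≥ 1, let F ∈ ℝ with F ≥ 0, and set δ = ε^n / (ε^n + (1−ε)^n). Then F ≤ ε / (1−ε) if and only if (1/2) * (1 − (1−δ) * (1 − F^n)) ≤ δ. -/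
/-! With `a = ε ^ n`, `b = (1 - ε) ^ n` and `x = F ^ n`, Eve's bound equals `(a + b x) / (2 (a + b))`,
which is at most `δ = a / (a + b)` exactly when `b x ≤ a`, i.e. `F ^ n ≤ (ε / (1 - ε)) ^ n`;
taking `n`-th roots of nonnegative reals removes the dependence on `n`. -/

lemma half_one_sub_mul_le_div_add_iff {a b x : ℝ} (hab : 0 < a + b) :
    1 / 2 * (1 - (1 - a / (a + b)) * (1 - x)) ≤ a / (a + b) ↔ b * x ≤ a := by
  have hbound : 1 / 2 * (1 - (1 - a / (a + b)) * (1 - x)) = (a + b * x) / (2 * (a + b)) := by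
    field_simp
    ring
  have hdelta : a / (a + b) = 2 * a / (2 * (a + b)) := (mul_div_mul_left a (a + b) two_ne_zero).symm
  rw [hbound, hdelta, div_le_div_iff_of_pos_right (by positivity)]
  constructor <;> intro h <;> linarith

theorem necessary_condition_iff
    (ε : ℝ) (hε₀ : 0 < ε) (hε₁ : ε < 1) (n : ℕ) (hn : 1 ≤ n)
    (F : ℝ) (hF : 0 ≤ F) :
    F ≤ ε / (1 - ε) ↔
      (1 / 2) * (1 - (1 - ε ^ n / (ε ^ n + (1 - ε) ^ n)) * (1 - F ^ n))
        ≤ ε ^ n / (ε ^ n + (1 - ε) ^ n) := by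
  have hb : 0 < (1 - ε) ^ n := pow_pos (sub_pos.mpr hε₁) n
  rw [half_one_sub_mul_le_div_add_iff (add_pos (pow_pos hε₀ n) hb), ← le_div_iff₀' hb, ← div_pow,
    pow_le_pow_iff_left₀ hF (div_nonneg hε₀.le (sub_pos.mpr hε₁).le) (by omega)]
end
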